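/- arXiv:2604.22078 — 8 statements merged into one kernel-verified Lean document; each statement's English description precedes it below -/
import Mathlib

section
/- Let $G$ be a finite group, $V$ a nonzero finite-dimensional complex vector space, and $\rho$ an irreducible quandle representation of $Conj(G)$ on $V$. Then for all $g, h \in G$ there exists a scalar $c \in \mathbb{C}^\times$ such that $\rho(gh) = c \cdot \rho(g)\rho(h)$; that is, the induced map $g \mapsto \overline{\rho(g)}$ from $G$ to $PGL(V) = GL(V)/\mathbb{C}^\times$ is a group homomorphism. -/
/-- For `G` a finite group and `ρ` an irreducible quandle representation of
`Conj(G)` on a nonzero finite-dimensional complex vector space `V`, for all `g, h` there is a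
scalar `c ∈ ℂˣ` with `ρ(gh) = c • ρ(g) ρ(h)`; i.e. `g ↦ class of ρ(g)` in `PGL(V)` is a
group homomorphism. -/
theorem stmt2 {G : Type*} [Group G] [Finite G] {V : Type*} [AddCommGroup V] [Module ℂ V]
    [FiniteDimensional ℂ V] [Nontrivial V]
    (ρ : G → (V →ₗ[ℂ] V)ˣ)
    (hρ : ∀ g h : G, ρ (g * h * g⁻¹) = ρ g * ρ h * (ρ g)⁻¹)
    (hirr : ∀ W : Submodule ℂ V,
      (∀ g : G, W.map (ρ g : V →ₗ[ℂ] V) ≤ W) → W = ⊥ ∨ W = ⊤) :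
    ∀ g h : G, ∃ c : ℂˣ, (ρ (g * h) : V →ₗ[ℂ] V) =
      (c : ℂ) • ((ρ g : V →ₗ[ℂ] V) * (ρ h : V →ₗ[ℂ] V)) := by
  intro g h
  set u : (V →ₗ[ℂ] V)ˣ := (ρ g * ρ h)⁻¹ * ρ (g * h) with hu
  -- `u` commutes with every `ρ k`
  have hcomm : ∀ k : G, u * ρ k = ρ k * u := by
    intro k
    have h1 := hρ (g * h) k
    have h2 := hρ g (h * k * h⁻¹)
    rw [hρ h k] at h2
    have heq : (g * h) * k * (g * h)⁻¹ = g * (h * k * h⁻¹) * g⁻¹ := by group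
    rw [heq, h2] at h1
    -- h1 : ρ g * (ρ h * ρ k * (ρ h)⁻¹) * (ρ g)⁻¹ = ρ (g*h) * ρ k * (ρ (g*h))⁻¹
    have E : ρ (g * h) * ρ k * (ρ (g * h))⁻¹ = (ρ g * ρ h) * ρ k * (ρ g * ρ h)⁻¹ := by
      rw [← h1]; group
    have E3 : u * ρ k * u⁻¹ = ρ k := by
      have step : u * ρ k * u⁻¹
          = (ρ g * ρ h)⁻¹ * (ρ (g * h) * ρ k * (ρ (g * h))⁻¹) * (ρ g * ρ h) := by
        rw [hu]; group
      rw [step, E]; group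
    exact mul_inv_eq_iff_eq_mul.mp E3
  -- `u` as an endomorphism has an eigenvalue
  obtain ⟨c, hc⟩ := Module.End.exists_eigenvalue (u : V →ₗ[ℂ] V)
  have hcomm' : ∀ (k : G) (x : V),
      (u : V →ₗ[ℂ] V) ((ρ k : V →ₗ[ℂ] V) x) = (ρ k : V →ₗ[ℂ] V) ((u : V →ₗ[ℂ] V) x) := by
    intro k x
    have := congrArg (fun w : (V →ₗ[ℂ] V)ˣ => (w : V →ₗ[ℂ] V) x) (hcomm k)
    simpa using this
  set W := Module.End.eigenspace (u : V →ₗ[ℂ] V) c with hW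
  have hWinv : ∀ k : G, W.map (ρ k : V →ₗ[ℂ] V) ≤ W := by
    intro k x hx
    obtain ⟨y, hy, rfl⟩ := hx
    have hy' : (u : V →ₗ[ℂ] V) y = c • y := Module.End.mem_eigenspace_iff.mp hy
    rw [Module.End.mem_eigenspace_iff]
    rw [hcomm' k y, hy', map_smul]
  have hWtop : W = ⊤ := by
    rcases hirr W hWinv with hbot | htop
    · exact absurd hbot hc
    · exact htop
  have hux : ∀ x : V, (u : V →ₗ[ℂ] V) x = c • x := by
    intro x
    have hx : x ∈ W := hWtop ▸ Submodule.mem_top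
    rwa [hW, Module.End.mem_eigenspace_iff] at hx
  -- `c ≠ 0`
  have hc0 : c ≠ 0 := by
    intro hc0
    obtain ⟨x, hx⟩ := exists_ne (0 : V)
    have h1 : (u : V →ₗ[ℂ] V) x = 0 := by rw [hux x, hc0, zero_smul]
    have h2 : ((u⁻¹ : (V →ₗ[ℂ] V)ˣ) : V →ₗ[ℂ] V) ((u : V →ₗ[ℂ] V) x) = x := by
      have h3 : ((u⁻¹ : (V →ₗ[ℂ] V)ˣ) : V →ₗ[ℂ] V) * (u : V →ₗ[ℂ] V) = 1 := by
        rw [← Units.val_mul, inv_mul_cancel u, Units.val_one]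
      calc ((u⁻¹ : (V →ₗ[ℂ] V)ˣ) : V →ₗ[ℂ] V) ((u : V →ₗ[ℂ] V) x)
          = (((u⁻¹ : (V →ₗ[ℂ] V)ˣ) : V →ₗ[ℂ] V) * (u : V →ₗ[ℂ] V)) x := rfl
        _ = x := by rw [h3]; rfl
    rw [h1, map_zero] at h2
    exact hx h2.symm
  refine ⟨Units.mk0 c hc0, ?_⟩
  have key : ρ (g * h) = (ρ g * ρ h) * u := by rw [hu]; group
  ext x
  have := congrArg (fun w : (V →ₗ[ℂ] V)ˣ => (w : V →ₗ[ℂ] V) x) key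
  rw [this]
  simp only [Units.val_mul, Module.End.mul_apply, LinearMap.smul_apply]
  rw [hux x, map_smul, map_smul]
  rfl
end

section
/- Let $G$ be a finite group, $V$ a nonzero finite-dimensional complex vector space, and let $\rho, \rho'$ be irreducible quandle representations of $Conj(G)$ on $V$ such that for every $g \in G$ there exists $c_g \in \mathbb{C}^\times$ with $\rho'(g) = c_g \cdot \rho(g)$. Then there exists a quandle character $\chi$ of $Conj(G)$ such that $\rho'(g) = \chi(g) \cdot \rho(g)$ for all $g \in G$. -/
/-- If `ρ, ρ'` are irreducible quandle representations of `Conj(G)` on a nonzero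
finite-dimensional complex vector space `V` with `ρ'(g)` a scalar multiple of `ρ(g)` for each
`g`, then `ρ' = χ · ρ` for some quandle character `χ` of `Conj(G)`. -/
theorem stmt3 {G : Type*} [Group G] [Finite G] {V : Type*} [AddCommGroup V] [Module ℂ V]
    [FiniteDimensional ℂ V] [Nontrivial V]
    (ρ ρ' : G → (V →ₗ[ℂ] V)ˣ)
    (hρ : ∀ g h : G, ρ (g * h * g⁻¹) = ρ g * ρ h * (ρ g)⁻¹)
    (hρ' : ∀ g h : G, ρ' (g * h * g⁻¹) = ρ' g * ρ' h * (ρ' g)⁻¹)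
    (hirr : ∀ W : Submodule ℂ V,
      (∀ g : G, W.map (ρ g : V →ₗ[ℂ] V) ≤ W) → W = ⊥ ∨ W = ⊤)
    (hirr' : ∀ W : Submodule ℂ V,
      (∀ g : G, W.map (ρ' g : V →ₗ[ℂ] V) ≤ W) → W = ⊥ ∨ W = ⊤)
    (hscal : ∀ g : G, ∃ c : ℂˣ, (ρ' g : V →ₗ[ℂ] V) = (c : ℂ) • (ρ g : V →ₗ[ℂ] V)) :
    ∃ χ : G → ℂˣ, (∀ g h : G, χ (g * h * g⁻¹) = χ h) ∧
      ∀ g : G, (ρ' g : V →ₗ[ℂ] V) = (χ g : ℂ) • (ρ g : V →ₗ[ℂ] V) := by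
  have key : ∀ (c c' : ℂ) (f : (V →ₗ[ℂ] V)ˣ),
      c • (f : V →ₗ[ℂ] V) = c' • (f : V →ₗ[ℂ] V) → c = c' := by
    intro c c' f h
    obtain ⟨v, hv⟩ := exists_ne (0 : V)
    have hfv : (f : V →ₗ[ℂ] V) v ≠ 0 := by
      intro h0
      apply hv
      have := congrArg (fun x => ((f⁻¹ : (V →ₗ[ℂ] V)ˣ) : V →ₗ[ℂ] V) x) h0
      simpa [← LinearMap.comp_apply, ← Module.End.mul_eq_comp, ← Units.val_mul] using this
    have hv2 := congrFun (congrArg DFunLike.coe h) v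
    simp only [LinearMap.smul_apply] at hv2
    exact smul_left_injective ℂ hfv hv2
  choose χ hχ using hscal
  refine ⟨χ, ?_, hχ⟩
  intro g h
  have e1 : ρ' (g * h * g⁻¹) * ρ' g = ρ' g * ρ' h := by
    rw [hρ' g h]; group
  have e2 : ((ρ (g * h * g⁻¹) * ρ g : (V →ₗ[ℂ] V)ˣ) : V →ₗ[ℂ] V)
      = ((ρ g * ρ h : (V →ₗ[ℂ] V)ˣ) : V →ₗ[ℂ] V) := by
    rw [show ρ (g * h * g⁻¹) * ρ g = ρ g * ρ h by rw [hρ g h]; group]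
  have e1' : ((χ (g * h * g⁻¹) : ℂ) * (χ g : ℂ)) • ((ρ g * ρ h : (V →ₗ[ℂ] V)ˣ) : V →ₗ[ℂ] V)
      = ((χ g : ℂ) * (χ h : ℂ)) • ((ρ g * ρ h : (V →ₗ[ℂ] V)ˣ) : V →ₗ[ℂ] V) := by
    have := congrArg Units.val e1
    simp only [Units.val_mul, hχ, smul_mul_smul_comm] at this
    rw [← Units.val_mul, ← Units.val_mul, e2] at this
    exact this
  have hc := key _ _ _ e1'
  have : (χ (g * h * g⁻¹) : ℂ) = (χ h : ℂ) := by
    exact mul_right_cancel₀ (Units.ne_zero (χ g)) (by rw [hc, mul_comm])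
  exact Units.ext this
end

section
/- Let $G$ be a finite group, $V$ a nonzero finite-dimensional complex vector space, $\rho$ an irreducible quandle representation of $Conj(G)$ on $V$, and suppose there is a group homomorphism $\tilde{\rho} : G \to GL(V)$ such that for every $g \in G$ there exists $c \in \mathbb{C}^\times$ with $\rho(g) = c \cdot \tilde{\rho}(g)$. Then $\tilde{\rho}$ is an irreducible linear representation of $G$, and there exists a quandle character $\chi$ of $Conj(G)$ with $\rho(g) = \chi(g) \cdot \tilde{\rho}(g)$ for all $g \in G$. -/
/-- If `ρ` is an irreducible quandle representation of `Conj(G)` on a nonzero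
finite-dimensional complex vector space `V` and `ρ̃ : G → GL(V)` is a group homomorphism such
that `ρ(g)` is a scalar multiple of `ρ̃(g)` for each `g`, then `ρ̃` is irreducible and
`ρ = χ · ρ̃` for some quandle character `χ`. -/
theorem stmt4 {G : Type*} [Group G] [Finite G] {V : Type*} [AddCommGroup V] [Module ℂ V]
    [FiniteDimensional ℂ V] [Nontrivial V]
    (ρ : G → (V →ₗ[ℂ] V)ˣ)
    (hρ : ∀ g h : G, ρ (g * h * g⁻¹) = ρ g * ρ h * (ρ g)⁻¹)
    (hirr : ∀ W : Submodule ℂ V,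
      (∀ g : G, W.map (ρ g : V →ₗ[ℂ] V) ≤ W) → W = ⊥ ∨ W = ⊤)
    (ρt : G →* (V →ₗ[ℂ] V)ˣ)
    (hscal : ∀ g : G, ∃ c : ℂˣ, (ρ g : V →ₗ[ℂ] V) = (c : ℂ) • (ρt g : V →ₗ[ℂ] V)) :
    (∀ W : Submodule ℂ V,
      (∀ g : G, W.map (ρt g : V →ₗ[ℂ] V) ≤ W) → W = ⊥ ∨ W = ⊤) ∧
    ∃ χ : G → ℂˣ, (∀ g h : G, χ (g * h * g⁻¹) = χ h) ∧
      ∀ g : G, (ρ g : V →ₗ[ℂ] V) = (χ g : ℂ) • (ρt g : V →ₗ[ℂ] V) := by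
  -- uniqueness of the scalar: if c • ρt g = d • ρt g then c = d
  have key : ∀ (g : G) (c d : ℂ),
      (c : ℂ) • (ρt g : V →ₗ[ℂ] V) = (d : ℂ) • (ρt g : V →ₗ[ℂ] V) → c = d := by
    intro g c d hcd
    obtain ⟨v, hv⟩ := exists_ne (0 : V)
    have hinv : ∀ w : V,
        (((ρt g)⁻¹ : (V →ₗ[ℂ] V)ˣ) : V →ₗ[ℂ] V) ((ρt g : V →ₗ[ℂ] V) w) = w := by
      intro w
      have h1 : (((ρt g)⁻¹ : (V →ₗ[ℂ] V)ˣ) : V →ₗ[ℂ] V) * (ρt g : V →ₗ[ℂ] V) = 1 :=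
        (ρt g).inv_mul
      calc (((ρt g)⁻¹ : (V →ₗ[ℂ] V)ˣ) : V →ₗ[ℂ] V) ((ρt g : V →ₗ[ℂ] V) w)
          = ((((ρt g)⁻¹ : (V →ₗ[ℂ] V)ˣ) : V →ₗ[ℂ] V) * (ρt g : V →ₗ[ℂ] V)) w := rfl
        _ = w := by rw [h1]; rfl
    have hfv : (ρt g : V →ₗ[ℂ] V) v ≠ 0 := by
      intro h0
      apply hv
      have := hinv v
      rw [h0, map_zero] at this
      exact this.symm
    have h2 : c • ((ρt g : V →ₗ[ℂ] V) v) = d • ((ρt g : V →ₗ[ℂ] V) v) := by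
      have := congrArg (fun F : V →ₗ[ℂ] V => F v) hcd
      simpa using this
    exact smul_left_injective ℂ hfv h2
  constructor
  · intro W hW
    apply hirr W
    intro g
    obtain ⟨c, hc⟩ := hscal g
    rintro x ⟨w, hw, rfl⟩
    rw [hc]
    exact W.smul_mem _ (hW g ⟨w, hw, rfl⟩)
  · refine ⟨fun g => (hscal g).choose, ?_, fun g => (hscal g).choose_spec⟩
    intro g h
    set χ : G → ℂˣ := fun g => (hscal g).choose with hχdef
    have hχ : ∀ g, (ρ g : V →ₗ[ℂ] V) = (χ g : ℂ) • (ρt g : V →ₗ[ℂ] V) :=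
      fun g => (hscal g).choose_spec
    -- ρ(ghg⁻¹) * ρ g = ρ g * ρ h
    have hmul : ρ (g * h * g⁻¹) * ρ g = ρ g * ρ h := by
      rw [hρ]; group
    have hval : ((ρ (g * h * g⁻¹) * ρ g : (V →ₗ[ℂ] V)ˣ) : V →ₗ[ℂ] V)
        = ((ρ g * ρ h : (V →ₗ[ℂ] V)ˣ) : V →ₗ[ℂ] V) := congrArg Units.val hmul
    have hT : (ρt (g * h * g⁻¹) : V →ₗ[ℂ] V) * (ρt g : V →ₗ[ℂ] V)
        = (ρt g : V →ₗ[ℂ] V) * (ρt h : V →ₗ[ℂ] V) := by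
      have : ρt (g * h * g⁻¹) * ρt g = ρt g * ρt h := by
        rw [← map_mul, ← map_mul]
        congr 1
        group
      exact congrArg Units.val this
    have hL : ((χ (g * h * g⁻¹) : ℂ) * (χ g : ℂ)) •
          ((ρt g : V →ₗ[ℂ] V) * (ρt h : V →ₗ[ℂ] V))
        = ((χ g : ℂ) * (χ h : ℂ)) • ((ρt g : V →ₗ[ℂ] V) * (ρt h : V →ₗ[ℂ] V)) := by
      have := hval
      rw [Units.val_mul, Units.val_mul, hχ (g * h * g⁻¹), hχ g, hχ h] at this
      rw [smul_mul_assoc, mul_smul_comm, smul_mul_assoc, mul_smul_comm,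
        smul_smul, smul_smul, hT] at this
      exact this
    have hTu : (ρt g : V →ₗ[ℂ] V) * (ρt h : V →ₗ[ℂ] V) = (ρt (g * h) : V →ₗ[ℂ] V) := by
      rw [map_mul]; rfl
    rw [hTu] at hL
    have := key (g * h) _ _ hL
    have hg : (χ g : ℂ) ≠ 0 := Units.ne_zero _
    rw [mul_comm ((χ (g * h * g⁻¹) : ℂ)) ((χ g : ℂ))] at this
    exact Units.ext (mul_left_cancel₀ hg this)
end

section
/- Let $G$ be a finite group such that every 2-cocycle $\alpha : G \times G \to \mathbb{C}^\times$ whose restriction to every abelian subgroup of $G$ is a coboundary on that subgroup, is itself a coboundary on $G$ (i.e. $B_{\mathbb{C}}(G) = 0$). Then for every nonzero finite-dimensional complex vector space $V$ and every irreducible quandle representation $\rho$ of $Conj(G)$ on $V$, there exist a quandle character $\chi$ of $Conj(G)$ and an irreducible linear group representation $\rho_0 : G \to GL(V)$ such that $\rho(g) = \chi(g) \cdot \rho_0(g)$ for all $g \in G$. -/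
universe u

noncomputable instance stmt8RootNat : RootableBy ℂˣ ℕ :=
  rootableByOfPowLeftSurj _ _ (fun {n} hn x => by
    obtain ⟨z, hz⟩ := IsAlgClosed.exists_pow_nat_eq (x : ℂ) (n := n) (Nat.pos_of_ne_zero hn)
    have hz0 : z ≠ 0 := by
      intro h
      apply x.ne_zero
      rw [← hz, h, zero_pow hn]
    exact ⟨Units.mk0 z hz0, Units.ext (by simp [hz])⟩)

noncomputable instance stmt8RootInt : RootableBy ℂˣ ℤ :=
  Group.rootableByIntOfRootableByNat ℂˣ

noncomputable instance stmt8Div : DivisibleBy (Additive ℂˣ) ℤ where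
  div a n := Additive.ofMul (RootableBy.root a.toMul n)
  div_zero a := by show Additive.ofMul _ = 0; rw [RootableBy.root_zero]; rfl
  div_cancel a hn := by
    show _ • Additive.ofMul _ = a
    rw [← ofMul_zpow, RootableBy.root_cancel _ hn]
    rfl

lemma stmt8_exists_retraction {M : Type u} [CommGroup M] (ι : ℂˣ →* M)
    (hι : Function.Injective ι) : ∃ r : M →* ℂˣ, ∀ x, r (ι x) = x := by
  have inj0 : Module.Injective ℤ (Additive ℂˣ) := (Module.Baer.of_divisible _).injective
  have injU : Module.Injective ℤ (ULift.{u} (Additive ℂˣ)) :=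
    Module.ulift_injective_of_injective _ inj0
  let e : ULift.{u} (Additive ℂˣ) ≃+ Additive ℂˣ := AddEquiv.ulift
  let f : ULift.{u} (Additive ℂˣ) →ₗ[ℤ] Additive M :=
    ((MonoidHom.toAdditive ι).comp e.toAddMonoidHom).toIntLinearMap
  have hf : Function.Injective f := fun a b hab => by
    apply e.injective
    exact hι hab
  obtain ⟨h, hh⟩ := injU.out f hf LinearMap.id
  refine ⟨MonoidHom.toAdditive.symm (e.toAddMonoidHom.comp h.toAddMonoidHom), fun x => ?_⟩
  have := hh (e.symm (Additive.ofMul x))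
  have hfx : f (e.symm (Additive.ofMul x)) = Additive.ofMul (ι x) := by
    simp [f]
  rw [hfx] at this
  show Additive.toMul (e (h (Additive.ofMul (ι x)))) = x
  rw [this]
  simp [e]



structure Stmt8Tw (A : Type u) : Type u where
  a : A
  x : ℂˣ

example (x y z : ℂˣ) : x * y * z = z * (y * x) := by ac_rfl

set_option maxHeartbeats 1600000 in
lemma stmt8_symm_cocycle {A : Type u} [CommGroup A] (α : A → A → ℂˣ)
    (hr : ∀ (M : Type u) (_ : CommGroup M) (ι : ℂˣ →* M), Function.Injective ι →
      ∃ r : M →* ℂˣ, ∀ x, r (ι x) = x)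
    (hc : ∀ g h k : A, α g h * α (g * h) k = α h k * α g (h * k))
    (hs : ∀ a b : A, α a b = α b a) :
    ∃ f : A → ℂˣ, ∀ a b : A, α a b = f a * f b * (f (a * b))⁻¹ := by
  have h1b : ∀ b, α 1 b = α 1 1 := by
    intro b
    have h := hc 1 1 b
    rw [one_mul, one_mul] at h
    exact (mul_right_cancel h).symm
  have hb1 : ∀ b, α b 1 = α 1 1 := by
    intro b
    have h := hc b 1 1
    rw [mul_one, one_mul] at h
    exact mul_right_cancel h
  letI : Mul (Stmt8Tw A) := ⟨fun p q => ⟨p.a * q.a, p.x * q.x * α p.a q.a⟩⟩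
  letI : One (Stmt8Tw A) := ⟨⟨1, (α 1 1)⁻¹⟩⟩
  letI : Inv (Stmt8Tw A) := ⟨fun p => ⟨p.a⁻¹, p.x⁻¹ * (α p.a p.a⁻¹)⁻¹ * (α 1 1)⁻¹⟩⟩
  have hmul : ∀ p q : Stmt8Tw A, p * q = ⟨p.a * q.a, p.x * q.x * α p.a q.a⟩ := fun _ _ => rfl
  have hone : (1 : Stmt8Tw A) = ⟨1, (α 1 1)⁻¹⟩ := rfl
  have hinv : ∀ p : Stmt8Tw A, p⁻¹ = ⟨p.a⁻¹, p.x⁻¹ * (α p.a p.a⁻¹)⁻¹ * (α 1 1)⁻¹⟩ :=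
    fun _ => rfl
  letI : CommGroup (Stmt8Tw A) :=
    { mul := (· * ·)
      one := 1
      inv := (·⁻¹)
      mul_assoc := by
        rintro ⟨a, x⟩ ⟨b, y⟩ ⟨c, z⟩
        rw [hmul, hmul, hmul, hmul]
        simp only [Stmt8Tw.mk.injEq]
        refine ⟨mul_assoc a b c, ?_⟩
        calc x * y * α a b * z * α (a * b) c
            = (x * y * z) * (α a b * α (a * b) c) := by ac_rfl
          _ = (x * y * z) * (α b c * α a (b * c)) := by rw [hc a b c]
          _ = x * (y * z * α b c) * α a (b * c) := by ac_rfl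
      one_mul := by
        rintro ⟨b, y⟩
        rw [hone, hmul]
        simp only [Stmt8Tw.mk.injEq]
        refine ⟨one_mul b, ?_⟩
        rw [h1b b, mul_comm, ← mul_assoc, mul_inv_cancel, one_mul]
      mul_one := by
        rintro ⟨a, x⟩
        rw [hone, hmul]
        simp only [Stmt8Tw.mk.injEq]
        refine ⟨mul_one a, ?_⟩
        rw [hb1 a, mul_assoc, inv_mul_cancel, mul_one]
      inv_mul_cancel := by
        rintro ⟨a, x⟩
        rw [hinv, hmul, hone]
        simp only [Stmt8Tw.mk.injEq]
        refine ⟨inv_mul_cancel a, ?_⟩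
        rw [hs a⁻¹ a]
        calc x⁻¹ * (α a a⁻¹)⁻¹ * (α 1 1)⁻¹ * x * α a a⁻¹
            = (x⁻¹ * x) * ((α a a⁻¹)⁻¹ * α a a⁻¹) * (α 1 1)⁻¹ := by ac_rfl
          _ = (α 1 1)⁻¹ := by rw [inv_mul_cancel, inv_mul_cancel, one_mul, one_mul]
      mul_comm := by
        rintro ⟨a, x⟩ ⟨b, y⟩
        rw [hmul, hmul]
        simp only [Stmt8Tw.mk.injEq]
        exact ⟨mul_comm a b, by rw [hs a b, mul_comm x y]⟩ }
  set ι : ℂˣ →* Stmt8Tw A :=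
    { toFun := fun x => ⟨1, x * (α 1 1)⁻¹⟩
      map_one' := by rw [hone]; simp only [Stmt8Tw.mk.injEq]; exact ⟨trivial, one_mul _⟩
      map_mul' := by
        intro x y
        rw [hmul]
        simp only [Stmt8Tw.mk.injEq]
        refine ⟨(one_mul 1).symm, ?_⟩
        rw [h1b 1]
        calc x * y * (α 1 1)⁻¹
            = x * (α 1 1)⁻¹ * (y * (α 1 1)⁻¹) * (α 1 1) := by
              rw [mul_assoc _ _ (α 1 1), mul_assoc y, inv_mul_cancel, mul_one]; ac_rfl
          _ = _ := rfl } with hι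
  have hinj : Function.Injective ι := by
    intro x y hxy
    have : x * (α 1 1)⁻¹ = y * (α 1 1)⁻¹ := congrArg Stmt8Tw.x hxy
    exact mul_right_cancel this
  obtain ⟨r, hri⟩ := hr (Stmt8Tw A) inferInstance ι hinj
  refine ⟨fun a => r ⟨a, 1⟩, fun a b => ?_⟩
  have hσ : (⟨a, 1⟩ : Stmt8Tw A) * ⟨b, 1⟩ = ι (α a b) * ⟨a * b, 1⟩ := by
    rw [hmul]
    have : ι (α a b) = ⟨1, α a b * (α 1 1)⁻¹⟩ := rfl
    rw [this, hmul]
    simp only [Stmt8Tw.mk.injEq]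
    refine ⟨(one_mul _).symm, ?_⟩
    rw [h1b (a * b), one_mul, one_mul, mul_one, mul_assoc, inv_mul_cancel, mul_one]
  have h2 := congrArg r hσ
  rw [map_mul, map_mul, hri] at h2
  rw [h2, mul_assoc, mul_inv_cancel, mul_one]

lemma stmt8_schur {V : Type} [AddCommGroup V] [Module ℂ V] [FiniteDimensional ℂ V]
    [Nontrivial V] {ι : Type*} (T : ι → V →ₗ[ℂ] V)
    (hirr : ∀ W : Submodule ℂ V, (∀ i, W.map (T i) ≤ W) → W = ⊥ ∨ W = ⊤)
    (z : V →ₗ[ℂ] V) (hz : ∀ i, z * T i = T i * z) :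
    ∃ c : ℂ, z = c • (1 : V →ₗ[ℂ] V) := by
  obtain ⟨c, hc⟩ := Module.End.exists_eigenvalue (z : Module.End ℂ V)
  refine ⟨c, ?_⟩
  have hW : ∀ i, (Module.End.eigenspace z c).map (T i) ≤ Module.End.eigenspace z c := by
    intro i x hx
    obtain ⟨v, hv, rfl⟩ := hx
    have hv' : v ∈ Module.End.eigenspace z c := hv
    rw [Module.End.mem_eigenspace_iff] at hv' ⊢
    have : z (T i v) = T i (z v) := by
      rw [← Module.End.mul_apply, hz i, Module.End.mul_apply]
    rw [this, hv', map_smul]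
  rcases hirr _ hW with h | h
  · exact absurd h hc
  · ext v
    have hv : v ∈ Module.End.eigenspace z c := h ▸ Submodule.mem_top
    rw [Module.End.mem_eigenspace_iff] at hv
    simpa using hv



set_option maxHeartbeats 1600000 in
/-- If `G` is a finite group with `B_ℂ(G) = 0` (every 2-cocycle with values in
`ℂˣ` whose restriction to every abelian subgroup is a coboundary is itself a coboundary),
then every irreducible quandle representation of `Conj(G)` over `ℂ` is of the form `χ · ρ₀`
with `χ` a quandle character and `ρ₀` an irreducible linear group representation of `G`. -/
theorem stmt8 {G : Type*} [Group G] [Finite G]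
    (hB : ∀ α : G → G → ℂˣ,
      (∀ g h k : G, α g h * α (g * h) k = α h k * α g (h * k)) →
      (∀ A : Subgroup G, (∀ a ∈ A, ∀ b ∈ A, a * b = b * a) →
        ∃ f : A → ℂˣ, ∀ a b : A, α a b = f a * f b * (f (a * b))⁻¹) →
      ∃ f : G → ℂˣ, ∀ g h : G, α g h = f g * f h * (f (g * h))⁻¹) :
    ∀ (V : Type) (_ : AddCommGroup V) (_ : Module ℂ V),
      FiniteDimensional ℂ V → Nontrivial V →
      ∀ ρ : G → (V →ₗ[ℂ] V)ˣ,
        (∀ g h : G, ρ (g * h * g⁻¹) = ρ g * ρ h * (ρ g)⁻¹) →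
        (∀ W : Submodule ℂ V,
          (∀ g : G, W.map (ρ g : V →ₗ[ℂ] V) ≤ W) → W = ⊥ ∨ W = ⊤) →
        ∃ (χ : G → ℂˣ) (ρ₀ : G →* (V →ₗ[ℂ] V)ˣ),
          (∀ g h : G, χ (g * h * g⁻¹) = χ h) ∧
          (∀ W : Submodule ℂ V,
            (∀ g : G, W.map (ρ₀ g : V →ₗ[ℂ] V) ≤ W) → W = ⊥ ∨ W = ⊤) ∧
          ∀ g : G, (ρ g : V →ₗ[ℂ] V) = (χ g : ℂ) • (ρ₀ g : V →ₗ[ℂ] V) := by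
  intro V iV mV hfd hnt ρ hq hirr
  -- basic nonvanishing facts
  have one_ne : (1 : V →ₗ[ℂ] V) ≠ 0 := by
    intro h0
    obtain ⟨v, hv⟩ := exists_ne (0 : V)
    apply hv
    calc v = (1 : V →ₗ[ℂ] V) v := (Module.End.one_apply v).symm
      _ = (0 : V →ₗ[ℂ] V) v := by rw [h0]
      _ = 0 := rfl
  have hune : ∀ u : (V →ₗ[ℂ] V)ˣ, (u : V →ₗ[ℂ] V) ≠ 0 := by
    intro u h0
    apply one_ne
    have h1 : (u : V →ₗ[ℂ] V) * ((u⁻¹ : (V →ₗ[ℂ] V)ˣ) : V →ₗ[ℂ] V) = 1 := by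
      rw [← Units.val_mul, mul_inv_cancel, Units.val_one]
    rw [h0, zero_mul] at h1
    exact h1.symm
  -- rearranged quandle relation
  have hq' : ∀ a b : G, ρ a * ρ b = ρ (a * b * a⁻¹) * ρ a := by
    intro a b
    rw [hq a b]
    exact (inv_mul_cancel_right _ _).symm
  -- the commutation key
  have key : ∀ g h k : G,
      ((ρ (g * h))⁻¹ * ρ g * ρ h) * ρ k = ρ k * ((ρ (g * h))⁻¹ * ρ g * ρ h) := by
    intro g h k
    have h1 : ρ g * (ρ h * ρ k) = ρ (g * (h * k * h⁻¹) * g⁻¹) * (ρ g * ρ h) := by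
      rw [hq' h k, ← mul_assoc, hq' g (h * k * h⁻¹), mul_assoc]
    have h2 : ρ (g * (h * k * h⁻¹) * g⁻¹) = ρ (g * h) * ρ k * (ρ (g * h))⁻¹ := by
      rw [show g * (h * k * h⁻¹) * g⁻¹ = (g * h) * k * (g * h)⁻¹ by group, hq]
    calc ((ρ (g * h))⁻¹ * ρ g * ρ h) * ρ k
        = (ρ (g * h))⁻¹ * (ρ g * (ρ h * ρ k)) := by group
      _ = (ρ (g * h))⁻¹ * (ρ (g * (h * k * h⁻¹) * g⁻¹) * (ρ g * ρ h)) := by rw [h1]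
      _ = (ρ (g * h))⁻¹ * ((ρ (g * h) * ρ k * (ρ (g * h))⁻¹) * (ρ g * ρ h)) := by rw [h2]
      _ = ρ k * ((ρ (g * h))⁻¹ * ρ g * ρ h) := by group
  -- scalars via Schur
  have hαex : ∀ g h : G, ∃ c : ℂˣ,
      ((ρ g : V →ₗ[ℂ] V) * (ρ h : V →ₗ[ℂ] V)) = (c : ℂ) • (ρ (g * h) : V →ₗ[ℂ] V) := by
    intro g h
    obtain ⟨c, hc⟩ := stmt8_schur (fun k : G => (ρ k : V →ₗ[ℂ] V)) hirr
      ((((ρ (g * h))⁻¹ * ρ g * ρ h : (V →ₗ[ℂ] V)ˣ)) : V →ₗ[ℂ] V)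
      (fun k => by
        have := congrArg (fun u : (V →ₗ[ℂ] V)ˣ => (u : V →ₗ[ℂ] V)) (key g h k)
        simpa [Units.val_mul] using this)
    have hu : ρ g * ρ h = ρ (g * h) * ((ρ (g * h))⁻¹ * ρ g * ρ h) := by group
    have hval : ((ρ g : V →ₗ[ℂ] V) * (ρ h : V →ₗ[ℂ] V))
        = (ρ (g * h) : V →ₗ[ℂ] V) * ((((ρ (g * h))⁻¹ * ρ g * ρ h : (V →ₗ[ℂ] V)ˣ)) : V →ₗ[ℂ] V) := by
      have := congrArg (fun u : (V →ₗ[ℂ] V)ˣ => (u : V →ₗ[ℂ] V)) hu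
      simpa [Units.val_mul] using this
    have hc0 : c ≠ 0 := by
      intro h0
      apply hune ((ρ (g * h))⁻¹ * ρ g * ρ h)
      rw [hc, h0, zero_smul]
    refine ⟨Units.mk0 c hc0, ?_⟩
    rw [hval, hc]
    rw [mul_smul_comm, mul_one]
    rfl
  choose α hα using hαex
  -- cocycle identity
  have hcoc : ∀ g h k : G, α g h * α (g * h) k = α h k * α g (h * k) := by
    intro g h k
    have lhs : ((ρ g : V →ₗ[ℂ] V) * (ρ h : V →ₗ[ℂ] V)) * (ρ k : V →ₗ[ℂ] V)
        = ((α g h : ℂ) * (α (g * h) k : ℂ)) • (ρ (g * h * k) : V →ₗ[ℂ] V) := by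
      rw [hα g h, smul_mul_assoc, hα (g * h) k, smul_smul]
    have rhs : ((ρ g : V →ₗ[ℂ] V) * (ρ h : V →ₗ[ℂ] V)) * (ρ k : V →ₗ[ℂ] V)
        = ((α h k : ℂ) * (α g (h * k) : ℂ)) • (ρ (g * h * k) : V →ₗ[ℂ] V) := by
      rw [mul_assoc, hα h k, mul_smul_comm, hα g (h * k), smul_smul,
        show g * (h * k) = g * h * k from (mul_assoc g h k).symm]
    have hceq : (α g h : ℂ) * (α (g * h) k : ℂ) = (α h k : ℂ) * (α g (h * k) : ℂ) :=
      smul_left_injective ℂ (hune (ρ (g * h * k))) (lhs.symm.trans rhs)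
    exact Units.ext (by push_cast; exact hceq)
  -- coboundary on abelian subgroups
  have habs : ∀ A : Subgroup G, (∀ a ∈ A, ∀ b ∈ A, a * b = b * a) →
      ∃ f : A → ℂˣ, ∀ a b : A, α a b = f a * f b * (f (a * b))⁻¹ := by
    intro A hA
    letI : CommGroup A :=
      { (inferInstance : Group A) with
        mul_comm := fun a b => Subtype.ext (hA a a.2 b b.2) }
    have hsym : ∀ a b : A, α (a : G) (b : G) = α (b : G) (a : G) := by
      intro a b
      have hcab : (a : G) * b * (a : G)⁻¹ = (b : G) := by
        rw [hA a a.2 b b.2, mul_inv_cancel_right]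
      have hcomm : ρ (a : G) * ρ (b : G) = ρ (b : G) * ρ (a : G) := by
        have h := hq' (a : G) (b : G)
        rw [hcab] at h
        exact h
      have hval : ((ρ (a : G) : V →ₗ[ℂ] V) * (ρ (b : G) : V →ₗ[ℂ] V))
          = ((ρ (b : G) : V →ₗ[ℂ] V) * (ρ (a : G) : V →ₗ[ℂ] V)) := by
        have := congrArg (fun u : (V →ₗ[ℂ] V)ˣ => (u : V →ₗ[ℂ] V)) hcomm
        simpa [Units.val_mul] using this
      have h1 := hα (a : G) (b : G)
      have h2 := hα (b : G) (a : G)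
      rw [show (b : G) * (a : G) = (a : G) * (b : G) from (hA a a.2 b b.2).symm] at h2
      have : (α (a : G) (b : G) : ℂ) • (ρ ((a : G) * (b : G)) : V →ₗ[ℂ] V)
          = (α (b : G) (a : G) : ℂ) • (ρ ((a : G) * (b : G)) : V →ₗ[ℂ] V) := by
        rw [← h1, ← h2, hval]
      exact Units.ext (smul_left_injective ℂ (hune (ρ ((a : G) * (b : G)))) this)
    obtain ⟨f, hf⟩ := stmt8_symm_cocycle (fun a b : A => α (a : G) (b : G))
      (fun M _ ι hι => stmt8_exists_retraction ι hι)
      (fun a b c => hcoc (a : G) (b : G) (c : G))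
      hsym
    exact ⟨f, fun a b => hf a b⟩
  obtain ⟨F, hF⟩ := hB α hcoc habs
  -- scalar units
  set s : ℂˣ →* (V →ₗ[ℂ] V)ˣ :=
    Units.map (algebraMap ℂ (V →ₗ[ℂ] V)).toMonoidHom with hs
  have hsval : ∀ x : ℂˣ, ((s x : (V →ₗ[ℂ] V)ˣ) : V →ₗ[ℂ] V) = (x : ℂ) • 1 := fun x =>
    Algebra.algebraMap_eq_smul_one (x : ℂ)
  have hαu : ∀ g h : G, ρ g * ρ h = s (α g h) * ρ (g * h) := by
    intro g h
    apply Units.ext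
    rw [Units.val_mul, Units.val_mul, hα, hsval, smul_mul_assoc, one_mul]
  have hscen : ∀ (x : ℂˣ) (u : (V →ₗ[ℂ] V)ˣ), s x * u = u * s x := by
    intro x u
    apply Units.ext
    rw [Units.val_mul, Units.val_mul, hsval, smul_mul_assoc, one_mul, mul_smul_comm, mul_one]
  have hsinj : Function.Injective s := by
    intro x y hxy
    have h := congrArg (fun u : (V →ₗ[ℂ] V)ˣ => (u : V →ₗ[ℂ] V)) hxy
    simp only [hsval] at h
    exact Units.ext (smul_left_injective ℂ one_ne h)
  have hρ1 : ρ 1 = s (F 1) := by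
    have h := hαu 1 1
    rw [mul_one (1 : G)] at h
    have h2 : ρ 1 = s (α 1 1) := mul_right_cancel h
    rw [h2]
    congr 1
    rw [hF 1 1, mul_one (1 : G), mul_inv_cancel_right]
  have hcomb : ∀ g h : G, (F g)⁻¹ * (F h)⁻¹ * α g h = (F (g * h))⁻¹ := by
    intro g h
    rw [hF g h]
    calc (F g)⁻¹ * (F h)⁻¹ * (F g * F h * (F (g * h))⁻¹)
        = ((F g)⁻¹ * F g) * (((F h)⁻¹ * F h) * (F (g * h))⁻¹) := by ac_rfl
      _ = (F (g * h))⁻¹ := by rw [inv_mul_cancel, inv_mul_cancel, one_mul, one_mul]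
  set ρ₀ : G →* (V →ₗ[ℂ] V)ˣ :=
    { toFun := fun g => s (F g)⁻¹ * ρ g
      map_one' := by
        show s (F 1)⁻¹ * ρ 1 = 1
        rw [hρ1, ← map_mul, inv_mul_cancel, map_one]
      map_mul' := by
        intro g h
        symm
        calc (s (F g)⁻¹ * ρ g) * (s (F h)⁻¹ * ρ h)
            = s (F g)⁻¹ * ((ρ g * s (F h)⁻¹) * ρ h) := by group
          _ = s (F g)⁻¹ * ((s (F h)⁻¹ * ρ g) * ρ h) := by rw [← hscen]
          _ = (s (F g)⁻¹ * s (F h)⁻¹) * (ρ g * ρ h) := by group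
          _ = (s (F g)⁻¹ * s (F h)⁻¹) * (s (α g h) * ρ (g * h)) := by rw [hαu]
          _ = (s (F g)⁻¹ * s (F h)⁻¹ * s (α g h)) * ρ (g * h) := by group
          _ = s ((F g)⁻¹ * (F h)⁻¹ * α g h) * ρ (g * h) := by
              rw [map_mul, map_mul, map_inv, map_inv]
          _ = s (F (g * h))⁻¹ * ρ (g * h) := by rw [hcomb g h, map_inv] } with hρ₀
  have hρ₀app : ∀ g : G, ρ₀ g = s (F g)⁻¹ * ρ g := fun g => rfl
  have hdecomp : ∀ g : G, ρ g = s (F g) * ρ₀ g := by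
    intro g
    rw [hρ₀app, ← mul_assoc, ← map_mul, mul_inv_cancel, map_one, one_mul]
  have hfinal : ∀ g : G, (ρ g : V →ₗ[ℂ] V) = ((F g : ℂ)) • (ρ₀ g : V →ₗ[ℂ] V) := by
    intro g
    rw [hdecomp g, Units.val_mul, hsval, smul_mul_assoc, one_mul]
  refine ⟨F, ρ₀, ?_, ?_, hfinal⟩
  · -- quandle character
    intro g h
    have h1 : ρ (g * h * g⁻¹) = ρ g * ρ h * (ρ g)⁻¹ := hq g h
    rw [hdecomp (g * h * g⁻¹), hdecomp g, hdecomp h] at h1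
    have h2 : s (F (g * h * g⁻¹)) * ρ₀ (g * h * g⁻¹)
        = s (F h) * (ρ₀ g * ρ₀ h * (ρ₀ g)⁻¹) := by
      rw [h1, mul_inv_rev]
      calc (s (F g) * ρ₀ g) * (s (F h) * ρ₀ h) * ((ρ₀ g)⁻¹ * (s (F g))⁻¹)
          = s (F g) * (ρ₀ g * s (F h)) * (ρ₀ h * (ρ₀ g)⁻¹ * (s (F g))⁻¹) := by group
        _ = s (F g) * (s (F h) * ρ₀ g) * (ρ₀ h * (ρ₀ g)⁻¹ * (s (F g))⁻¹) := by
            rw [← hscen (F h) (ρ₀ g)]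
        _ = (s (F g) * s (F h)) * ((ρ₀ g * ρ₀ h * (ρ₀ g)⁻¹) * s ((F g)⁻¹)) := by
            rw [← map_inv s (F g)]; group
        _ = (s (F g) * s (F h)) * (s ((F g)⁻¹) * (ρ₀ g * ρ₀ h * (ρ₀ g)⁻¹)) := by
            rw [hscen ((F g)⁻¹) (ρ₀ g * ρ₀ h * (ρ₀ g)⁻¹)]
        _ = (s (F h) * s (F g)) * (s ((F g)⁻¹) * (ρ₀ g * ρ₀ h * (ρ₀ g)⁻¹)) := by
            rw [hscen (F g) (s (F h))]
        _ = s (F h) * ((s (F g) * s ((F g)⁻¹)) * (ρ₀ g * ρ₀ h * (ρ₀ g)⁻¹)) := by group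
        _ = s (F h) * (ρ₀ g * ρ₀ h * (ρ₀ g)⁻¹) := by
            rw [← map_mul, mul_inv_cancel, map_one, one_mul]
    have h3 : ρ₀ (g * h * g⁻¹) = ρ₀ g * ρ₀ h * (ρ₀ g)⁻¹ := by
      rw [map_mul, map_mul, map_inv]
    rw [h3] at h2
    exact hsinj (mul_right_cancel h2)
  · -- irreducibility
    intro W hW
    apply hirr
    intro g
    intro y hy
    obtain ⟨x, hx, rfl⟩ := hy
    have hmem : (ρ₀ g : V →ₗ[ℂ] V) x ∈ W := hW g (Submodule.mem_map_of_mem hx)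
    have : (ρ g : V →ₗ[ℂ] V) x = (F g : ℂ) • ((ρ₀ g : V →ₗ[ℂ] V) x) := by
      rw [hfinal g]; rfl
    rw [this]
    exact W.smul_mem _ hmem
end

section
/- Let $G$ be a group and let $\pi : A(G) \to G$ be the unique group homomorphism from the enveloping group of $Conj(G)$ to $G$ satisfying $\pi \circ \varphi_G = \mathrm{id}_G$. Then the kernel of $\pi$ is contained in the center of $A(G)$. -/
open Rack

private def stmt11_toQ {G : Type*} [Group G] :
    Rack.PreEnvelGroup (Quandle.Conj G) → Rack.EnvelGroup (Quandle.Conj G) :=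
  Quotient.mk (Rack.PreEnvelGroup.setoid (Quandle.Conj G))

private lemma stmt11_toQ_surj {G : Type*} [Group G] (y : Rack.EnvelGroup (Quandle.Conj G)) :
    ∃ a, stmt11_toQ a = y :=
  Quotient.exists_rep y

private lemma stmt11_toQ_unit {G : Type*} [Group G] :
    stmt11_toQ (G := G) Rack.PreEnvelGroup.unit = 1 := rfl

private lemma stmt11_toQ_incl {G : Type*} [Group G] (h : G) :
    stmt11_toQ (Rack.PreEnvelGroup.incl h) = Rack.toEnvelGroup (Quandle.Conj G) h := rfl

private lemma stmt11_toQ_mul {G : Type*} [Group G] (a b : Rack.PreEnvelGroup (Quandle.Conj G)) :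
    stmt11_toQ (a.mul b) = stmt11_toQ a * stmt11_toQ b := rfl

private lemma stmt11_toQ_inv {G : Type*} [Group G] (a : Rack.PreEnvelGroup (Quandle.Conj G)) :
    stmt11_toQ a.inv = (stmt11_toQ a)⁻¹ := rfl

private lemma stmt11_aux {G : Type*} [Group G]
    (π : Rack.EnvelGroup (Quandle.Conj G) →* G)
    (hπ : ∀ g : G, π (Rack.toEnvelGroup (Quandle.Conj G) g) = g) :
    ∀ (a : Rack.PreEnvelGroup (Quandle.Conj G)) (g : G),
      stmt11_toQ a * Rack.toEnvelGroup (Quandle.Conj G) g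
        = Rack.toEnvelGroup (Quandle.Conj G) (π (stmt11_toQ a) * g * (π (stmt11_toQ a))⁻¹)
            * stmt11_toQ a := by
  intro a
  induction a with
  | unit =>
    intro g
    rw [stmt11_toQ_unit]
    simp
  | incl h =>
    intro g
    rw [stmt11_toQ_incl, hπ]
    have key : Rack.toEnvelGroup (Quandle.Conj G) (h * g * h⁻¹)
        = Rack.toEnvelGroup (Quandle.Conj G) h * Rack.toEnvelGroup (Quandle.Conj G) g
            * (Rack.toEnvelGroup (Quandle.Conj G) h)⁻¹ :=
      (Rack.toEnvelGroup (Quandle.Conj G)).map_act' (x := h) (y := g)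
    rw [key]
    group
  | mul a b iha ihb =>
    intro g
    rw [stmt11_toQ_mul, mul_assoc, ihb, ← mul_assoc, iha, mul_assoc]
    congr 2
    rw [π.map_mul]
    group
  | inv a iha =>
    intro g
    rw [stmt11_toQ_inv, map_inv]
    have := iha ((π (stmt11_toQ a))⁻¹ * g * π (stmt11_toQ a))
    have h2 : π (stmt11_toQ a) * ((π (stmt11_toQ a))⁻¹ * g * π (stmt11_toQ a))
        * (π (stmt11_toQ a))⁻¹ = g := by group
    rw [h2] at this
    have := congrArg (fun z => (stmt11_toQ a)⁻¹ * z * (stmt11_toQ a)⁻¹) this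
    group at this ⊢
    rw [this]

/-- For a group `G`, the kernel of the canonical homomorphism
`π : A(G) → G` (the unique group homomorphism with `π ∘ φ_G = id`) from the enveloping group
of the conjugacy quandle of `G` is contained in the center of `A(G)`. -/
theorem stmt11 {G : Type*} [Group G]
    (π : Rack.EnvelGroup (Quandle.Conj G) →* G)
    (hπ : ∀ g : G, π (Rack.toEnvelGroup (Quandle.Conj G) g) = g) :
    π.ker ≤ Subgroup.center (Rack.EnvelGroup (Quandle.Conj G)) := by
  intro x hx
  rw [MonoidHom.mem_ker] at hx
  rw [Subgroup.mem_center_iff]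
  have hgen : ∀ g : G, x * Rack.toEnvelGroup (Quandle.Conj G) g
      = Rack.toEnvelGroup (Quandle.Conj G) g * x := by
    intro g
    obtain ⟨a, rfl⟩ := stmt11_toQ_surj x
    have := stmt11_aux π hπ a g
    rw [hx] at this
    simpa using this
  intro y
  obtain ⟨a, rfl⟩ := stmt11_toQ_surj y
  induction a with
  | unit => rw [stmt11_toQ_unit]; simp
  | incl h => rw [stmt11_toQ_incl]; exact (hgen h).symm
  | mul a b iha ihb =>
    rw [stmt11_toQ_mul, mul_assoc, ihb, ← mul_assoc, iha, mul_assoc]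
  | inv a iha =>
    rw [stmt11_toQ_inv]
    have hc : Commute x (stmt11_toQ a) := iha.symm
    exact hc.inv_right.symm
end

section
/- Let $G$ be a finite group and $\pi : A(G) \to G$ the unique group homomorphism with $\pi \circ \varphi_G = \mathrm{id}_G$. Then the derived (commutator) subgroup of $A(G)$ is finite. -/
/-!
Conjugation by `x` in `A(G)` permutes the generators `φ g` as conjugation by `π x` does in `G`,
so `ker π` is central in `A(G)`. As `G` is finite, the centre then has finite index, hence
`A(G)` has only finitely many commutators, and Schur's theorem makes `A(G)'` finite.
-/

open Rack Subgroup
open scoped commutatorElement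

theorem commutatorElement_mul_of_mem_center {A : Type*} [Group A] {a b z w : A}
    (hz : z ∈ center A) (hw : w ∈ center A) : ⁅a * z, b * w⁆ = ⁅a, b⁆ := by
  rw [mem_center_iff] at hz hw
  calc ⁅a * z, b * w⁆ = a * (z * (b * w)) * z⁻¹ * a⁻¹ * (w⁻¹ * b⁻¹) := by
        rw [commutatorElement_def]; group
    _ = a * b * (w * a⁻¹) * w⁻¹ * b⁻¹ := by rw [← hz (b * w)]; group
    _ = a * b * (a⁻¹ * w) * w⁻¹ * b⁻¹ := by rw [hw a⁻¹]
    _ = ⁅a, b⁆ := by rw [commutatorElement_def]; group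

theorem finite_commutatorSet_of_finiteIndex_center (A : Type*) [Group A]
    [(center A).FiniteIndex] : Finite (commutatorSet A) := by
  refine Set.Finite.subset
    (Set.finite_range fun p : (A ⧸ center A) × (A ⧸ center A) => ⁅p.1.out, p.2.out⁆) ?_
  rintro _ ⟨a, b, rfl⟩
  obtain ⟨⟨z, hz⟩, ha⟩ := QuotientGroup.mk_out_eq_mul (center A) a
  obtain ⟨⟨w, hw⟩, hb⟩ := QuotientGroup.mk_out_eq_mul (center A) b
  refine ⟨(a, b), ?_⟩
  simp only [ha, hb]
  exact commutatorElement_mul_of_mem_center hz hw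

namespace Rack

variable {R : Type*} [Rack R]

theorem closure_range_toEnvelGroup :
    closure (Set.range (toEnvelGroup R)) = ⊤ := by
  refine (Subgroup.eq_top_iff' _).mpr fun x => ?_
  induction x using Quotient.inductionOn with
  | h a =>
    induction a with
    | unit => exact one_mem _
    | incl r => exact subset_closure ⟨r, rfl⟩
    | mul a b ha hb => exact mul_mem ha hb
    | inv a ha => exact inv_mem ha

theorem conj_toEnvelGroup (x : EnvelGroup R) (r : R) :
    x * toEnvelGroup R r * x⁻¹ = toEnvelGroup R (envelAction x r) := by
  have hx : x ∈ closure (Set.range (toEnvelGroup R)) := by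
    rw [closure_range_toEnvelGroup]; trivial
  induction hx using closure_induction generalizing r with
  | mem _ hy =>
    obtain ⟨s, rfl⟩ := hy
    rw [envelAction_prop, (toEnvelGroup R).map_act]
    rfl
  | one => simp
  | mul a b _ _ ha hb =>
    rw [map_mul, Equiv.Perm.mul_apply, ← ha, ← hb]
    group
  | inv a _ ha =>
    have h := ha (envelAction a⁻¹ r)
    rw [← Equiv.Perm.mul_apply, ← map_mul, mul_inv_cancel, map_one, Equiv.Perm.one_apply] at h
    rw [← h]
    group

theorem ker_envelAction_le_center :
    (envelAction : EnvelGroup R →* R ≃ R).ker ≤ center (EnvelGroup R) := by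
  intro k hk
  rw [← centralizer_univ, ← coe_top, ← closure_range_toEnvelGroup, centralizer_closure,
    mem_centralizer_iff]
  rintro _ ⟨r, rfl⟩
  have h := conj_toEnvelGroup k r
  rw [MonoidHom.mem_ker.mp hk, Equiv.Perm.one_apply, mul_inv_eq_iff_eq_mul] at h
  exact h.symm

theorem envelAction_conj_apply {G : Type*} [Group G] (π : EnvelGroup (Quandle.Conj G) →* G)
    (hπ : ∀ g : G, π (toEnvelGroup (Quandle.Conj G) g) = g) (x : EnvelGroup (Quandle.Conj G))
    (g : G) : envelAction x g = π x * g * (π x)⁻¹ := by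
  have h := congrArg π (conj_toEnvelGroup x g)
  rwa [hπ, map_mul, map_mul, map_inv, hπ, eq_comm] at h

end Rack

/-- For a finite group `G`, the derived (commutator) subgroup of the enveloping
group `A(G)` of the conjugacy quandle of `G` is finite. -/
theorem stmt13 {G : Type*} [Group G] [Finite G]
    (π : Rack.EnvelGroup (Quandle.Conj G) →* G)
    (hπ : ∀ g : G, π (Rack.toEnvelGroup (Quandle.Conj G) g) = g) :
    Finite (commutator (Rack.EnvelGroup (Quandle.Conj G))) := by
  have hker : π.ker ≤ center (EnvelGroup (Quandle.Conj G)) := fun k hk =>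
    ker_envelAction_le_center <| MonoidHom.mem_ker.mpr <| Equiv.ext fun g => by
      rw [envelAction_conj_apply π hπ, MonoidHom.mem_ker.mp hk]
      simp
  have := finiteIndex_of_le hker
  have := finite_commutatorSet_of_finiteIndex_center (EnvelGroup (Quandle.Conj G))
  infer_instance
end

section
/- Let $G$ be a finite perfect group (i.e. $G$ equals its own commutator subgroup) such that every symmetric 2-cocycle on $G$ with values in $\mathbb{C}^\times$ is a coboundary. Let $\pi : A(G) \to G$ be the unique group homomorphism with $\pi \circ \varphi_G = \mathrm{id}_G$ and $Ab : A(G) \to A(G)^{ab}$ the abelianization map. Then $\pi \times Ab : A(G) \to G \times A(G)^{ab}$, $a \mapsto (\pi(a), Ab(a))$, is a group isomorphism. -/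
/-!
The kernel of `π` is central in `A(G)`, because `a φ(h) a⁻¹ = φ(π(a) h π(a)⁻¹)` and `A(G)` is
generated by the `φ(h)`. Hence the factor set `c(g, h) = φ(g) φ(h) φ(gh)⁻¹` of the section `φ` is
a 2-cocycle with values in `ker π`; it is symmetric because `φ(g) φ(h) = φ(ghg⁻¹) φ(g)` and `c` is
invariant under conjugation. For a character `χ` of `ker π`, the symmetric cocycle `χ ∘ c` is the
coboundary of some `f`, and then `a ↦ f(π a) χ(φ(π a)⁻¹ a)` extends `χ` to `A(G)`. Such
extensions kill commutators and characters into `ℂˣ` separate the points of an abelian group, so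
`ker π ∩ [A(G), A(G)] = 1`, which is injectivity. Surjectivity holds since
`π [A(G), A(G)] = [G, G] = G`.
-/

noncomputable def AddCircle.ratToCircle : AddCircle (1 : ℚ) →+ Additive Circle :=
  QuotientAddGroup.lift _
    (Circle.expHom.comp ((2 * Real.pi) • (Rat.castHom ℝ).toAddMonoidHom)) <| by
    rw [AddSubgroup.zmultiples_le, AddMonoidHom.mem_ker]
    simp

theorem AddCircle.injective_ratToCircle : Function.Injective AddCircle.ratToCircle := by
  refine (injective_iff_map_eq_zero _).2 fun x hx => ?_
  induction x using QuotientAddGroup.induction_on with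
  | H q =>
    obtain ⟨n, hn⟩ := Circle.exp_eq_one.mp (Additive.ofMul.injective hx)
    have hq : q = n := by
      have : (q : ℝ) = n := by simp at hn; nlinarith [Real.pi_pos]
      exact_mod_cast this
    exact (AddCircle.coe_eq_zero_iff 1).mpr ⟨n, by simp [hq]⟩

theorem CommGroup.exists_monoidHom_units_complex_apply_ne_one {K : Type*} [CommGroup K] {x : K}
    (hx : x ≠ 1) : ∃ χ : K →* ℂˣ, χ x ≠ 1 := by
  obtain ⟨c, hc⟩ := CharacterModule.exists_character_apply_ne_zero_of_ne_zero
    (A := Additive K) (a := Additive.ofMul x) hx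
  refine ⟨Circle.toUnits.comp (AddMonoidHom.toMultiplicativeLeft (AddCircle.ratToCircle.comp c)),
    fun h => hc ?_⟩
  exact (map_eq_zero_iff _ AddCircle.injective_ratToCircle).mp
    ((map_eq_one_iff Circle.toUnits unitSphereToUnits_injective).mp h)

section CentralExtension

variable {E G : Type*} [Group E] [Group G] {π : E →* G} {s : G → E}

def factorSet (hs : ∀ g, π (s g) = g) (g h : G) : π.ker :=
  ⟨s g * s h * (s (g * h))⁻¹, by simp [hs]⟩

def kerPart (hs : ∀ g, π (s g) = g) (a : E) : π.ker :=
  ⟨(s (π a))⁻¹ * a, by simp [hs]⟩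

variable (hs : ∀ g, π (s g) = g)

theorem factorSet_one_one : (factorSet hs 1 1 : E) = s 1 := by
  simp [factorSet]

theorem kerPart_coe (k : π.ker) : kerPart hs k = (factorSet hs 1 1)⁻¹ * k := by
  ext
  simp [kerPart, factorSet_one_one, MonoidHom.mem_ker.mp k.2]

variable (hc : π.ker ≤ Subgroup.center E)
include hc

theorem factorSet_mul_factorSet (g h k : G) :
    factorSet hs g h * factorSet hs (g * h) k = factorSet hs h k * factorSet hs g (h * k) := by
  have hZ := Subgroup.mem_center_iff.mp (hc (factorSet hs h k).2)
  ext
  calc ((factorSet hs g h * factorSet hs (g * h) k : π.ker) : E)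
      = s g * factorSet hs h k * s (h * k) * (s (g * (h * k)))⁻¹ := by
        simp only [Subgroup.coe_mul, factorSet, mul_assoc]; group
    _ = factorSet hs h k * (s g * s (h * k) * (s (g * (h * k)))⁻¹) := by rw [hZ]; group
    _ = _ := by simp only [Subgroup.coe_mul, factorSet]

theorem kerPart_mul (a b : E) :
    kerPart hs (a * b) = factorSet hs (π a) (π b) * kerPart hs a * kerPart hs b := by
  have ha := Subgroup.mem_center_iff.mp (hc (kerPart hs a).2)
  have hf := Subgroup.mem_center_iff.mp (hc (factorSet hs (π a) (π b)).2)
  ext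
  simp only [kerPart, factorSet, Subgroup.coe_mul, map_mul] at ha hf ⊢
  calc (s (π a * π b))⁻¹ * (a * b)
      = (s (π a * π b))⁻¹ * (s (π a) * ((s (π a))⁻¹ * a) * s (π b)) * ((s (π b))⁻¹ * b) := by
        group
    _ = (s (π a * π b))⁻¹ * (s (π a) * s (π b) * (s (π a * π b))⁻¹) * s (π a * π b)
          * ((s (π a))⁻¹ * a) * ((s (π b))⁻¹ * b) := by
        rw [mul_assoc (s (π a)), ← ha]; group
    _ = _ := by rw [hf]; group

theorem exists_monoidHom_extension_of_factorSet_eq {M : Type*} [CommGroup M] (χ : π.ker →* M)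
    (f : G → M) (hf : ∀ g h, χ (factorSet hs g h) = f g * f h * (f (g * h))⁻¹) :
    ∃ Φ : E →* M, ∀ k : π.ker, Φ k = χ k := by
  have hf1 : χ (factorSet hs 1 1) = f 1 := by simpa using hf 1 1
  refine ⟨{ toFun := fun a => f (π a) * χ (kerPart hs a), map_one' := ?_, map_mul' := ?_ },
    fun k => ?_⟩
  · have h1 := kerPart_coe hs 1
    simp only [OneMemClass.coe_one, mul_one] at h1
    simp [h1, hf1]
  · intro a b
    simp only [kerPart_mul hs hc, map_mul, hf]
    simp [mul_comm, mul_left_comm, mul_assoc]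
  · simp [kerPart_coe hs k, hf1, MonoidHom.mem_ker.mp k.2]

end CentralExtension

open scoped IsMulCommutative in
theorem inf_commutator_eq_bot_of_forall_extension {E : Type*} [Group E]
    (N : Subgroup E) [IsMulCommutative N]
    (hext : ∀ χ : N →* ℂˣ, ∃ Φ : E →* ℂˣ, ∀ n : N, Φ n = χ n) :
    N ⊓ commutator E = ⊥ := by
  refine eq_bot_iff.mpr fun x ⟨hxN, hxc⟩ => Subgroup.mem_bot.mpr ?_
  by_contra hx
  obtain ⟨χ, hχ⟩ := CommGroup.exists_monoidHom_units_complex_apply_ne_one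
    (x := (⟨x, hxN⟩ : N)) (by simpa [Subtype.ext_iff] using hx)
  obtain ⟨Φ, hΦ⟩ := hext χ
  exact hχ (hΦ ⟨x, hxN⟩ ▸ Abelianization.commutator_subset_ker Φ hxc)

theorem MonoidHom.bijective_prod_abelianizationOf {E G : Type*} [Group E] [Group G]
    (π : E →* G) (hπ : Function.Surjective π) (hG : commutator G = ⊤)
    (h : π.ker ⊓ commutator E = ⊥) :
    Function.Bijective (π.prod Abelianization.of) := by
  refine ⟨(MonoidHom.ker_eq_bot_iff _).mp (by rwa [MonoidHom.ker_prod, Abelianization.ker_of]), ?_⟩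
  rintro ⟨g, c⟩
  obtain ⟨a, rfl⟩ : ∃ a, Abelianization.of a = c := QuotientGroup.mk_surjective c
  have hmap : (commutator E).map π = ⊤ := by
    rw [commutator_def, Subgroup.map_commutator, Subgroup.map_top_of_surjective _ hπ,
      ← commutator_def, hG]
  obtain ⟨b, hb, hπb⟩ := hmap.ge (Subgroup.mem_top ((π a)⁻¹ * g))
  refine ⟨a * b, ?_⟩
  simp [hπb, MonoidHom.mem_ker.mp (Abelianization.commutator_subset_ker _ hb)]

theorem Rack.closure_range_toEnvelGroup_s18 (R : Type*) [Rack R] :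
    Subgroup.closure (Set.range (toEnvelGroup R)) = ⊤ := by
  refine eq_top_iff.mpr fun x _ => Quotient.inductionOn x fun a => ?_
  induction a with
  | unit => exact one_mem _
  | incl y => exact Subgroup.subset_closure ⟨y, rfl⟩
  | mul a b iha ihb => exact mul_mem iha ihb
  | inv a iha => exact inv_mem iha

namespace Quandle.Conj

variable {G : Type*} [Group G]

def toEnvelGroup (g : G) : Rack.EnvelGroup (Conj G) :=
  Rack.toEnvelGroup (Conj G) g

local notation "ι" => toEnvelGroup

theorem toEnvelGroup_conj (g h : G) : ι (g * h * g⁻¹) = ι g * ι h * (ι g)⁻¹ := by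
  have := (Rack.toEnvelGroup (Conj G)).map_act (x := g) (y := h)
  rwa [conj_act_eq_conj, conj_act_eq_conj] at this

variable {π : Rack.EnvelGroup (Conj G) →* G} (hπ : ∀ g, π (ι g) = g)
include hπ

theorem conj_toEnvelGroup (a : Rack.EnvelGroup (Conj G)) (h : G) :
    a * ι h * a⁻¹ = ι (π a * h * (π a)⁻¹) := by
  have ha : a ∈ Subgroup.closure (Set.range ι) :=
    (Rack.closure_range_toEnvelGroup_s18 (Conj G)).ge (Subgroup.mem_top a)
  induction ha using Subgroup.closure_induction generalizing h with
  | mem _ hx =>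
    obtain ⟨g, rfl⟩ := hx
    rw [hπ, toEnvelGroup_conj]
  | one => simp
  | mul x y _ _ ihx ihy =>
    rw [map_mul, show x * y * ι h * (x * y)⁻¹ = x * (y * ι h * y⁻¹) * x⁻¹ by group, ihy, ihx]
    congr 1; group
  | inv x _ ihx =>
    have := ihx ((π x)⁻¹ * h * π x)
    rw [show π x * ((π x)⁻¹ * h * π x) * (π x)⁻¹ = h by group] at this
    rw [map_inv, inv_inv, ← this]
    group

theorem ker_le_center : π.ker ≤ Subgroup.center (Rack.EnvelGroup (Conj G)) := by
  intro n hn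
  rw [← Subgroup.centralizer_univ, ← Subgroup.coe_top, ← Rack.closure_range_toEnvelGroup_s18,
    Subgroup.centralizer_closure]
  rintro _ ⟨h, rfl⟩
  have := conj_toEnvelGroup hπ n h
  rw [MonoidHom.mem_ker.mp hn, one_mul, inv_one, mul_one] at this
  exact (mul_inv_eq_iff_eq_mul.mp this).symm

theorem factorSet_conj (x g h : G) :
    factorSet hπ (x * g * x⁻¹) (x * h * x⁻¹) = factorSet hπ g h := by
  have hZ := Subgroup.mem_center_iff.mp (ker_le_center hπ (factorSet hπ g h).2)
  ext
  calc (factorSet hπ (x * g * x⁻¹) (x * h * x⁻¹) : Rack.EnvelGroup (Conj G))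
      = ι x * factorSet hπ g h * (ι x)⁻¹ := by
        simp only [factorSet, show x * g * x⁻¹ * (x * h * x⁻¹) = x * (g * h) * x⁻¹ by group,
          toEnvelGroup_conj]
        group
    _ = factorSet hπ g h := by rw [hZ]; group

theorem factorSet_comm (g h : G) : factorSet hπ g h = factorSet hπ h g := by
  calc factorSet hπ g h = factorSet hπ (g * h * g⁻¹) g := by
        ext
        simp only [factorSet, show g * h * g⁻¹ * g = g * h by group, toEnvelGroup_conj]
        group
    _ = factorSet hπ (g * h * g⁻¹) (g * g * g⁻¹) := by rw [mul_inv_cancel_right]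
    _ = factorSet hπ h g := factorSet_conj hπ g h g

end Quandle.Conj

theorem stmt18_general {G : Type*} [Group G]
    (hperf : commutator G = ⊤)
    (hsymm : ∀ α : G → G → ℂˣ,
      (∀ g h k : G, α g h * α (g * h) k = α h k * α g (h * k)) →
      (∀ g h : G, α g h = α h g) →
      ∃ f : G → ℂˣ, ∀ g h : G, α g h = f g * f h * (f (g * h))⁻¹)
    (π : Rack.EnvelGroup (Quandle.Conj G) →* G)
    (hπ : ∀ g : G, π (Rack.toEnvelGroup (Quandle.Conj G) g) = g) :
    Function.Bijective
      (fun a : Rack.EnvelGroup (Quandle.Conj G) => (π a, Abelianization.of a)) := by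
  have hcentral := Quandle.Conj.ker_le_center hπ
  have : IsMulCommutative π.ker := Subgroup.le_centralizer_iff_isMulCommutative.mp
    (hcentral.trans (Subgroup.center_le_centralizer _))
  have hext (χ : π.ker →* ℂˣ) : ∃ Φ : Rack.EnvelGroup (Quandle.Conj G) →* ℂˣ,
      ∀ k : π.ker, Φ k = χ k := by
    obtain ⟨f, hf⟩ := hsymm (fun g h => χ (factorSet hπ g h))
      (fun g h k => by simp only [← map_mul, factorSet_mul_factorSet hπ hcentral])
      (fun g h => congrArg χ (Quandle.Conj.factorSet_comm hπ g h))
    exact exists_monoidHom_extension_of_factorSet_eq hπ hcentral χ f hf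
  exact MonoidHom.bijective_prod_abelianizationOf π (fun g => ⟨_, hπ g⟩) hperf
    (inf_commutator_eq_bot_of_forall_extension π.ker hext)

/-- For a finite perfect group `G` such that every symmetric 2-cocycle on `G`
with values in `ℂˣ` is a coboundary, the homomorphism `π × Ab : A(G) → G × A(G)^{ab}` is a
group isomorphism. -/
theorem stmt18 {G : Type*} [Group G] [Finite G]
    (hperf : commutator G = ⊤)
    (hsymm : ∀ α : G → G → ℂˣ,
      (∀ g h k : G, α g h * α (g * h) k = α h k * α g (h * k)) →
      (∀ g h : G, α g h = α h g) →
      ∃ f : G → ℂˣ, ∀ g h : G, α g h = f g * f h * (f (g * h))⁻¹)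
    (π : Rack.EnvelGroup (Quandle.Conj G) →* G)
    (hπ : ∀ g : G, π (Rack.toEnvelGroup (Quandle.Conj G) g) = g) :
    Function.Bijective
      (fun a : Rack.EnvelGroup (Quandle.Conj G) => (π a, Abelianization.of a)) :=
  stmt18_general hperf hsymm π hπ
end

section
/- Let $G$ be a group. There is a group isomorphism between the abelianization of $A(G)$ and the free abelian group on the set of conjugacy classes of $G$, sending, for each $g \in G$, the image of the generator $\varphi_G(g)$ in the abelianization to the basis element indexed by the conjugacy class of $g$. -/
/-!
A homomorphism from the abelianized enveloping group of a rack `R` to an abelian group `A` is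
the same as a map `f : R → A` with `f (x ◃ y) = f y`, since conjugation is trivial in `A`; that
is, a map constant on the orbits of the inner automorphism group. So the abelianization is free
abelian on these orbits, and for the conjugation quandle of `G` they are the conjugacy classes.
-/

open Quandles

namespace Quandle

theorem conj_act_eq_right {A : Type*} [CommGroup A] (x y : Conj A) : x ◃ y = y := by
  rw [conj_act_eq_conj, mul_inv_cancel_comm]

end Quandle

namespace Rack

/-- The quotient by the equivalence relation generated by `y ~ x ◃ y`, i.e. the orbits of the inner
automorphism group. -/
def Orbits (R : Type*) [Rack R] : Type _ := Quot fun y z : R => ∃ x, x ◃ y = z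

variable {R : Type*} [Rack R]

def Orbits.mk (y : R) : Orbits R := Quot.mk _ y

theorem Orbits.mk_surjective : Function.Surjective (Orbits.mk : R → Orbits R) :=
  Quot.mk_surjective

theorem Orbits.mk_act (x y : R) : Orbits.mk (x ◃ y) = Orbits.mk y :=
  (Quot.sound ⟨x, rfl⟩).symm

@[ext]
theorem EnvelGroup.hom_ext {H : Type*} [Group H] {f₁ f₂ : EnvelGroup R →* H}
    (h : ∀ x, f₁ (toEnvelGroup R x) = f₂ (toEnvelGroup R x)) : f₁ = f₂ :=
  toEnvelGroup.map.symm.injective (DFunLike.ext _ _ h)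

@[simp]
theorem toEnvelGroup.map_toEnvelGroup {G : Type*} [Group G] (f : R →◃ Quandle.Conj G) (x : R) :
    toEnvelGroup.map f (toEnvelGroup R x) = f x :=
  rfl

theorem abelianization_of_toEnvelGroup_act (x y : R) :
    Abelianization.of (toEnvelGroup R (x ◃ y)) = Abelianization.of (toEnvelGroup R y) := by
  rw [ShelfHom.map_act]
  exact (Quandle.Conj.map Abelianization.of).map_act.trans (Quandle.conj_act_eq_right _ _)

def toFreeAbelianGroupOrbits :
    R →◃ Quandle.Conj (Multiplicative (FreeAbelianGroup (Orbits R))) where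
  toFun y := .ofAdd (.of (Orbits.mk y))
  map_act' {x y} := by rw [Orbits.mk_act, Quandle.conj_act_eq_right]

@[simp]
theorem toFreeAbelianGroupOrbits_apply (y : R) :
    toFreeAbelianGroupOrbits y = .ofAdd (.of (Orbits.mk y)) :=
  rfl

def ofFreeAbelianGroupOrbits :
    FreeAbelianGroup (Orbits R) →+ Additive (Abelianization (EnvelGroup R)) :=
  FreeAbelianGroup.lift <|
    Quot.lift (fun y => .ofMul (Abelianization.of (toEnvelGroup R y))) <| by
      rintro _ _ ⟨x, rfl⟩
      rw [abelianization_of_toEnvelGroup_act]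

@[simp]
theorem ofFreeAbelianGroupOrbits_of_mk (y : R) :
    ofFreeAbelianGroupOrbits (.of (Orbits.mk y)) = .ofMul (Abelianization.of (toEnvelGroup R y)) :=
  FreeAbelianGroup.lift_apply_of _ _

def abelianizationEnvelGroupEquiv :
    Abelianization (EnvelGroup R) ≃* Multiplicative (FreeAbelianGroup (Orbits R)) :=
  MonoidHom.toMulEquiv (Abelianization.lift (toEnvelGroup.map toFreeAbelianGroupOrbits))
    ofFreeAbelianGroupOrbits.toMultiplicativeLeft
    (by ext; simp)
    (by
      ext x
      obtain ⟨y, rfl⟩ := Orbits.mk_surjective x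
      simp)

theorem abelianizationEnvelGroupEquiv_of (y : R) :
    abelianizationEnvelGroupEquiv (Abelianization.of (toEnvelGroup R y)) =
      .ofAdd (.of (Orbits.mk y)) := rfl

end Rack

def Quandle.Conj.orbitsEquivConjClasses (G : Type*) [Group G] :
    Rack.Orbits (Quandle.Conj G) ≃ ConjClasses G where
  toFun := Quot.lift ConjClasses.mk <| by
    rintro y _ ⟨x, rfl⟩
    rw [ConjClasses.mk_eq_mk_iff_isConj, Quandle.conj_act_eq_conj]
    exact isConj_iff.mpr ⟨x, rfl⟩
  invFun := Quotient.lift Rack.Orbits.mk <| by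
    rintro y _ h
    obtain ⟨x, rfl⟩ := isConj_iff.mp h
    exact (Rack.Orbits.mk_act (R := Quandle.Conj G) x y).symm
  left_inv := Quot.ind fun _ => rfl
  right_inv := Quotient.ind fun _ => rfl

/-- For a group `G`, there is a group isomorphism between the abelianization of
`A(G)` and the free abelian group on the set of conjugacy classes of `G`, sending the image of
the generator `φ_G(g)` in the abelianization to the basis element indexed by the conjugacy
class of `g`. -/
theorem stmt19 {G : Type*} [Group G] :
    ∃ e : Abelianization (Rack.EnvelGroup (Quandle.Conj G)) ≃*
        Multiplicative (FreeAbelianGroup (ConjClasses G)),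
      ∀ g : G, e (Abelianization.of (Rack.toEnvelGroup (Quandle.Conj G) g)) =
        Multiplicative.ofAdd (FreeAbelianGroup.of (ConjClasses.mk g)) := by
  refine ⟨Rack.abelianizationEnvelGroupEquiv.trans
    (FreeAbelianGroup.equivOfEquiv (Quandle.Conj.orbitsEquivConjClasses G)).toMultiplicative,
    fun g => ?_⟩
  rw [MulEquiv.trans_apply, Rack.abelianizationEnvelGroupEquiv_of]
  exact congrArg Multiplicative.ofAdd (FreeAbelianGroup.map_of_apply _)
end
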